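/- Let N ≥ 3 be an integer, let a, c > 0 and b ≥ 0 be real numbers, set θ := (b + √(b² + 4ac))/(2c) and t := θ^{(N−2)/2}. Then (1/2)·a·t² + ((N−2)/(2(N−1)))·b·t^{2(N−1)/(N−2)} − ((N−2)/(2N))·c·t^{2N/(N−2)} = (1/N)·((N−2)/(2(N−1)))·[c·θ^N + (N/(N−2))·a·θ^{N−2}]. -/

import Mathlib

open Real

/-!
θ is the positive root of c θ² = b θ + a, and the Nehari projection t = θ^((N-2)/2) turns the
three powers t², t^τ̃, t^2* into θ^(N-2), θ^(N-1), θ^N. Substituting b θ^(N-1) = c θ^N - a θ^(N-2)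
leaves only the terms in a θ^(N-2) and c θ^N, whose coefficients collapse to the stated ones.
-/

lemma mul_sq_eq_of_eq_quadratic_root {a b c θ : ℝ} (hc : c ≠ 0) (hdisc : 0 ≤ b ^ 2 + 4 * a * c)
    (hθ : θ = (b + √(b ^ 2 + 4 * a * c)) / (2 * c)) : c * θ ^ 2 = b * θ + a := by
  have hsqrt := sq_sqrt hdisc
  generalize √(b ^ 2 + 4 * a * c) = s at hsqrt hθ
  subst hθ
  field_simp
  linear_combination hsqrt

lemma quadratic_root_pos {a b c : ℝ} (ha : 0 < a) (hc : 0 < c) :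
    0 < (b + √(b ^ 2 + 4 * a * c)) / (2 * c) := by
  have hb : -b < √(b ^ 2 + 4 * a * c) := by
    calc -b ≤ |b| := neg_le_abs b
      _ = √(b ^ 2) := (sqrt_sq_eq_abs b).symm
      _ < √(b ^ 2 + 4 * a * c) := by gcongr; nlinarith
  exact div_pos (by linarith) (by positivity)

lemma rpow_div_two_sq {x : ℝ} (hx : 0 ≤ x) (p : ℝ) : (x ^ (p / 2)) ^ 2 = x ^ p := by
  rw [← rpow_natCast, ← rpow_mul hx]
  norm_num

lemma rpow_div_two_rpow {x p : ℝ} (hx : 0 ≤ x) (hp : p ≠ 0) (q : ℝ) :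
    (x ^ (p / 2)) ^ (2 * q / p) = x ^ q := by
  rw [← rpow_mul hx]
  congr 1
  field_simp

lemma nehari_energy_identity {n a b c θ u : ℝ} (hn : n ≠ 0) (hn1 : n - 1 ≠ 0) (hn2 : n - 2 ≠ 0)
    (hθ : c * θ ^ 2 = b * θ + a) :
    (1 / 2) * a * u + ((n - 2) / (2 * (n - 1))) * b * (u * θ) - ((n - 2) / (2 * n)) * c * (u * θ ^ 2)
      = (1 / n) * ((n - 2) / (2 * (n - 1))) * (c * (u * θ ^ 2) + (n / (n - 2)) * a * u) := by
  field_simp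
  linear_combination (-(n - 2) * n * u) * hθ

theorem stmt_1 (N : ℕ) (hN : 3 ≤ N) (a b c : ℝ) (ha : 0 < a) (hc : 0 < c) :
    let θ : ℝ := (b + Real.sqrt (b ^ 2 + 4 * a * c)) / (2 * c)
    let t : ℝ := θ ^ (((N : ℝ) - 2) / 2)
    (1 / 2) * a * t ^ 2
      + (((N : ℝ) - 2) / (2 * ((N : ℝ) - 1))) * b * t ^ (2 * ((N : ℝ) - 1) / ((N : ℝ) - 2))
      - (((N : ℝ) - 2) / (2 * (N : ℝ))) * c * t ^ (2 * (N : ℝ) / ((N : ℝ) - 2))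
    = (1 / (N : ℝ)) * (((N : ℝ) - 2) / (2 * ((N : ℝ) - 1)))
        * (c * θ ^ (N : ℝ) + ((N : ℝ) / ((N : ℝ) - 2)) * a * θ ^ ((N : ℝ) - 2)) := by
  intro θ t
  have hN3 : (3 : ℝ) ≤ N := by exact_mod_cast hN
  have hN2 : (N : ℝ) - 2 ≠ 0 := by linarith
  have hθ : 0 < θ := quadratic_root_pos ha hc
  have hroot : c * θ ^ 2 = b * θ + a :=
    mul_sq_eq_of_eq_quadratic_root hc.ne' (by positivity) rfl
  have hN1 : θ ^ ((N : ℝ) - 1) = θ ^ ((N : ℝ) - 2) * θ := by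
    rw [← rpow_add_one hθ.ne']
    ring_nf
  have hN : θ ^ (N : ℝ) = θ ^ ((N : ℝ) - 2) * θ ^ 2 := by
    rw [← rpow_add_natCast hθ.ne']
    congr 1
    push_cast
    ring
  rw [rpow_div_two_sq hθ.le, rpow_div_two_rpow hθ.le hN2, rpow_div_two_rpow hθ.le hN2, hN1, hN]
  exact nehari_energy_identity (by linarith) (by linarith) hN2 hroot
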